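/- Let (A, μ, η, λ, Δ) be an odd BV unital infinitesimal bialgebra with Δη = 0, and define β = Δμ - μ(Δ⊗1) - μ(1⊗Δ) and γ = λΔ + (Δ⊗1)λ + (1⊗Δ)λ. Then γμ - λβ = (β⊗1)(1⊗λ) + (μ⊗1)(1⊗γ) + (1⊗μ)(γ⊗1) + (1⊗β)(λ⊗1) - (μ⊗β)(1⊗λη⊗1) - (β⊗μ)(1⊗λη⊗1) - (μ⊗μ)(1⊗γη⊗1). -/

import Mathlib

/-!
Common framework: a "super" (parity-graded) module `A` over a field `R`, with parity
operator `ι = (-1)^deg`, Koszul twist `τ` on `A ⊗ A`, product `mul = μ`, unit `e = η(1)`,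
coproduct `cop = λ` (of odd degree) and BV operator `d = Δ` (of degree 1).
Operators such as `1⊗Δ`, `1⊗λ`, `1⊗Δ⊗1`, … carry Koszul signs, implemented by
inserting the parity operator `ι` on the tensor factors to the left of the odd map.
Triple tensor products are written with the right-associated bracketing `A ⊗ (A ⊗ A)`.
-/

open TensorProduct

noncomputable section

variable {R : Type*} [Field R] {A : Type*} [AddCommGroup A] [Module R A]

/-- Data of a (parity-)graded module with product, unit, coproduct and BV operator:
`ι` is the parity operator `(-1)^deg`, `τ` is the Koszul twist `a⊗b ↦ (-1)^{|a||b|} b⊗a`. -/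
structure BVData (R : Type*) (A : Type*) [Field R] [AddCommGroup A] [Module R A] where
  /-- the parity operator `(-1)^deg` -/
  ι : A →ₗ[R] A
  /-- the Koszul twist `τ` -/
  τ : A ⊗[R] A →ₗ[R] A ⊗[R] A
  /-- the product `μ`, of degree 0 -/
  mul : A ⊗[R] A →ₗ[R] A
  /-- the unit `e = η(1)` -/
  e : A
  /-- the coproduct `λ`, of odd degree -/
  cop : A →ₗ[R] A ⊗[R] A
  /-- the BV operator `Δ`, of degree 1 -/
  d : A →ₗ[R] A

namespace BVData

variable (D : BVData R A)

/-- `τ ⊗ 1` on `A ⊗ (A ⊗ A)` -/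
def t12 : A ⊗[R] (A ⊗[R] A) →ₗ[R] A ⊗[R] (A ⊗[R] A) :=
  (TensorProduct.assoc R A A A).toLinearMap ∘ₗ
    map D.τ (LinearMap.id : A →ₗ[R] A) ∘ₗ (TensorProduct.assoc R A A A).symm.toLinearMap

/-- `1 ⊗ τ` on `A ⊗ (A ⊗ A)` -/
def t23 : A ⊗[R] (A ⊗[R] A) →ₗ[R] A ⊗[R] (A ⊗[R] A) :=
  map (LinearMap.id : A →ₗ[R] A) D.τ

/-- the cyclic permutation `σ = (τ⊗1)(1⊗τ)` -/
def sig : A ⊗[R] (A ⊗[R] A) →ₗ[R] A ⊗[R] (A ⊗[R] A) := D.t12 ∘ₗ D.t23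

/-- `1 + σ + σ²` -/
def cyc : A ⊗[R] (A ⊗[R] A) →ₗ[R] A ⊗[R] (A ⊗[R] A) :=
  LinearMap.id + D.sig + D.sig ∘ₗ D.sig

/-- `μ ⊗ 1` -/
def mulL : A ⊗[R] (A ⊗[R] A) →ₗ[R] A ⊗[R] A :=
  map D.mul (LinearMap.id : A →ₗ[R] A) ∘ₗ (TensorProduct.assoc R A A A).symm.toLinearMap

/-- `1 ⊗ μ` (no Koszul sign: `μ` is even) -/
def mulR : A ⊗[R] (A ⊗[R] A) →ₗ[R] A ⊗[R] A :=
  map (LinearMap.id : A →ₗ[R] A) D.mul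

/-- `λ ⊗ 1` -/
def copL : A ⊗[R] A →ₗ[R] A ⊗[R] (A ⊗[R] A) :=
  (TensorProduct.assoc R A A A).toLinearMap ∘ₗ map D.cop (LinearMap.id : A →ₗ[R] A)

/-- `1 ⊗ λ` (with Koszul sign: `λ` is odd) -/
def copR : A ⊗[R] A →ₗ[R] A ⊗[R] (A ⊗[R] A) := map D.ι D.cop

/-- `Δ ⊗ 1` -/
def dL : A ⊗[R] A →ₗ[R] A ⊗[R] A := map D.d (LinearMap.id : A →ₗ[R] A)

/-- `1 ⊗ Δ` (with Koszul sign) -/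
def dR : A ⊗[R] A →ₗ[R] A ⊗[R] A := map D.ι D.d

/-- `Δ ⊗ 1 ⊗ 1` -/
def d1 : A ⊗[R] (A ⊗[R] A) →ₗ[R] A ⊗[R] (A ⊗[R] A) :=
  map D.d (LinearMap.id : A ⊗[R] A →ₗ[R] A ⊗[R] A)

/-- `1 ⊗ Δ ⊗ 1` (with Koszul sign) -/
def d2 : A ⊗[R] (A ⊗[R] A) →ₗ[R] A ⊗[R] (A ⊗[R] A) :=
  map D.ι (map D.d (LinearMap.id : A →ₗ[R] A))

/-- `1 ⊗ 1 ⊗ Δ` (with Koszul sign) -/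
def d3 : A ⊗[R] (A ⊗[R] A) →ₗ[R] A ⊗[R] (A ⊗[R] A) :=
  map D.ι (map D.ι D.d)

/-- the copairing `λη = λ(η(1))` -/
def copair : A ⊗[R] A := D.cop D.e

/-- `(Δμ) ⊗ 1` -/
def dmul1 : A ⊗[R] (A ⊗[R] A) →ₗ[R] A ⊗[R] A :=
  map (D.d ∘ₗ D.mul) (LinearMap.id : A →ₗ[R] A)
    ∘ₗ (TensorProduct.assoc R A A A).symm.toLinearMap

/-- `(λΔ) ⊗ 1` -/
def copd1 : A ⊗[R] A →ₗ[R] A ⊗[R] (A ⊗[R] A) :=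
  (TensorProduct.assoc R A A A).toLinearMap
    ∘ₗ map (D.cop ∘ₗ D.d) (LinearMap.id : A →ₗ[R] A)

/-- the BV bracket `β = [Δ, μ] = Δμ - μ(Δ⊗1) - μ(1⊗Δ)` (degree 1) -/
def bracket : A ⊗[R] A →ₗ[R] A :=
  D.d ∘ₗ D.mul - D.mul ∘ₗ D.dL - D.mul ∘ₗ D.dR

/-- the BV cobracket `γ = [Δ, λ] = λΔ + (Δ⊗1)λ + (1⊗Δ)λ` (even degree) -/
def cobracket : A →ₗ[R] A ⊗[R] A :=
  D.cop ∘ₗ D.d + D.dL ∘ₗ D.cop + D.dR ∘ₗ D.cop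

/-- `β ⊗ 1` -/
def braL : A ⊗[R] (A ⊗[R] A) →ₗ[R] A ⊗[R] A :=
  map D.bracket (LinearMap.id : A →ₗ[R] A)
    ∘ₗ (TensorProduct.assoc R A A A).symm.toLinearMap

/-- `1 ⊗ β` (with Koszul sign: `β` is odd) -/
def braR : A ⊗[R] (A ⊗[R] A) →ₗ[R] A ⊗[R] A := map D.ι D.bracket

/-- `γ ⊗ 1` -/
def cobraL : A ⊗[R] A →ₗ[R] A ⊗[R] (A ⊗[R] A) :=
  (TensorProduct.assoc R A A A).toLinearMap
    ∘ₗ map D.cobracket (LinearMap.id : A →ₗ[R] A)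

/-- `1 ⊗ γ` (no Koszul sign: `γ` is even) -/
def cobraR : A ⊗[R] A →ₗ[R] A ⊗[R] (A ⊗[R] A) :=
  map (LinearMap.id : A →ₗ[R] A) D.cobracket

end BVData

/-- `(f ⊗ g)(1 ⊗ c ⊗ 1)` where `c ∈ A ⊗ A` is inserted in the middle and `s` is the
Koszul sign operator acting on the first slot:
`a ⊗ b ↦ Σ f(s(a) ⊗ c') ⊗ g(c'' ⊗ b)` for `c = Σ c' ⊗ c''`. -/
noncomputable def insertMid (f g : A ⊗[R] A →ₗ[R] A) (s : A →ₗ[R] A) (c : A ⊗[R] A) :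
    A ⊗[R] A →ₗ[R] A ⊗[R] A :=
  map f g
    ∘ₗ (TensorProduct.assoc R A A (A ⊗[R] A)).symm.toLinearMap
    ∘ₗ map (LinearMap.id : A →ₗ[R] A) (TensorProduct.assoc R A A A).toLinearMap
    ∘ₗ map s (TensorProduct.mk R (A ⊗[R] A) A c)

/-- Background axioms of the grading: `ι` is the parity involution, `τ` the Koszul twist;
`μ` and `η` are even, `λ` and `Δ` are odd. -/
structure IsGraded (D : BVData R A) : Prop where
  invol : D.ι ∘ₗ D.ι = LinearMap.id
  tausq : D.τ ∘ₗ D.τ = LinearMap.id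
  tau_parity : D.τ ∘ₗ map D.ι D.ι = map D.ι D.ι ∘ₗ D.τ
  tau_nat_iota : D.τ ∘ₗ map D.ι (LinearMap.id : A →ₗ[R] A)
      = map (LinearMap.id : A →ₗ[R] A) D.ι ∘ₗ D.τ
  tau_nat_d : D.τ ∘ₗ D.dL = D.dR ∘ₗ D.τ
  mul_even : D.ι ∘ₗ D.mul = D.mul ∘ₗ map D.ι D.ι
  unit_even : D.ι D.e = D.e
  cop_odd : map D.ι D.ι ∘ₗ D.cop = -(D.cop ∘ₗ D.ι)
  d_odd : D.ι ∘ₗ D.d = -(D.d ∘ₗ D.ι)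

/-- The axioms of an odd BV unital infinitesimal bialgebra. -/
structure IsBVui (D : BVData R A) extends IsGraded D : Prop where
  mul_assoc : D.mul ∘ₗ D.mulL = D.mul ∘ₗ D.mulR
  mul_comm : D.mul ∘ₗ D.τ = D.mul
  unit_mul : ∀ a : A, D.mul (D.e ⊗ₜ[R] a) = a
  mul_unit : ∀ a : A, D.mul (a ⊗ₜ[R] D.e) = a
  cop_coassoc : D.copL ∘ₗ D.cop = -(D.copR ∘ₗ D.cop)
  cop_cocomm : D.τ ∘ₗ D.cop = -D.cop
  d_squared : D.d ∘ₗ D.d = 0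
  /-- the unital infinitesimal relation
  `λμ = (1⊗μ)(λ⊗1) + (μ⊗1)(1⊗λ) - (μ⊗μ)(1⊗λη⊗1)` -/
  unital_infinitesimal :
    D.cop ∘ₗ D.mul =
      D.mulR ∘ₗ D.copL + D.mulL ∘ₗ D.copR - insertMid D.mul D.mul D.ι D.copair
  /-- the 7-term relation for `Δ` and `μ`:
  `Δμ(μ⊗1) = [μ(Δμ⊗1) - μ(μ⊗1)(Δ⊗1⊗1)](1+σ+σ²)` -/
  seven_mul :
    D.d ∘ₗ D.mul ∘ₗ D.mulL =
      (D.mul ∘ₗ D.dmul1 - D.mul ∘ₗ D.mulL ∘ₗ D.d1) ∘ₗ D.cyc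
  /-- the 7-term relation for `Δ` and `λ`:
  `(λ⊗1)λΔ = -(1+σ+σ²)[(Δ⊗1⊗1)(λ⊗1)λ + (λΔ⊗1)λ]` -/
  seven_cop :
    D.copL ∘ₗ D.cop ∘ₗ D.d =
      -(D.cyc ∘ₗ (D.d1 ∘ₗ D.copL ∘ₗ D.cop + D.copd1 ∘ₗ D.cop))
  /-- the 11-term relation for `Δ`, `μ`, `λ` and `η` -/
  eleven :
    D.cop ∘ₗ D.d ∘ₗ D.mul =
      D.cop ∘ₗ D.mul ∘ₗ D.dL + D.cop ∘ₗ D.mul ∘ₗ D.dR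
      - D.dL ∘ₗ D.cop ∘ₗ D.mul - D.dR ∘ₗ D.cop ∘ₗ D.mul
      + D.mulL ∘ₗ D.d2 ∘ₗ D.copR ∘ₗ (LinearMap.id + D.τ)
      + D.mulR ∘ₗ D.d2 ∘ₗ D.copL ∘ₗ (LinearMap.id + D.τ)
      - insertMid D.mul D.mul (D.ι ∘ₗ D.ι) (D.dR D.copair) ∘ₗ (LinearMap.id + D.τ)

/-- The axioms of an odd (BV) Frobenius algebra, without the BV Frobenius relation:
`(A, μ, λ, η, ε)` is a graded Frobenius algebra with `|μ| = 0` and `|λ|` odd,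
and `(A, μ, η, Δ)` is a BV algebra. -/
structure IsBVFrobCore (D : BVData R A) (ε : A →ₗ[R] R) extends IsGraded D : Prop where
  eps_odd : ε ∘ₗ D.ι = -ε
  mul_assoc : D.mul ∘ₗ D.mulL = D.mul ∘ₗ D.mulR
  mul_comm : D.mul ∘ₗ D.τ = D.mul
  unit_mul : ∀ a : A, D.mul (D.e ⊗ₜ[R] a) = a
  mul_unit : ∀ a : A, D.mul (a ⊗ₜ[R] D.e) = a
  cop_coassoc : D.copL ∘ₗ D.cop = -(D.copR ∘ₗ D.cop)
  cop_cocomm : D.τ ∘ₗ D.cop = -D.cop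
  /-- `(ε⊗1)λ = 1` -/
  counit_l : (TensorProduct.lid R A).toLinearMap ∘ₗ
      map ε (LinearMap.id : A →ₗ[R] A) ∘ₗ D.cop = LinearMap.id
  /-- `(1⊗ε)λ = -1` (with Koszul sign) -/
  counit_r : (TensorProduct.rid R A).toLinearMap ∘ₗ map D.ι ε ∘ₗ D.cop = -LinearMap.id
  /-- the Frobenius relation `λμ = (μ⊗1)(1⊗λ)` -/
  frobenius_l : D.cop ∘ₗ D.mul = D.mulL ∘ₗ D.copR
  /-- the Frobenius relation `λμ = (1⊗μ)(λ⊗1)` -/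
  frobenius_r : D.cop ∘ₗ D.mul = D.mulR ∘ₗ D.copL
  d_squared : D.d ∘ₗ D.d = 0
  /-- the 7-term relation for `Δ` and `μ` -/
  seven_mul :
    D.d ∘ₗ D.mul ∘ₗ D.mulL =
      (D.mul ∘ₗ D.dmul1 - D.mul ∘ₗ D.mulL ∘ₗ D.d1) ∘ₗ D.cyc

/-- The axioms of an odd BV Frobenius algebra. -/
structure IsBVFrob (D : BVData R A) (ε : A →ₗ[R] R) extends IsBVFrobCore D ε : Prop where
  /-- the BV Frobenius relation `(Δ⊗1)λη = (1⊗Δ)λη` -/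
  bv_frobenius : D.dL D.copair = D.dR D.copair

section Aux

open BVData LinearMap

variable {M N P Q : Type*} [AddCommGroup M] [Module R M] [AddCommGroup N] [Module R N]
  [AddCommGroup P] [Module R P] [AddCommGroup Q] [Module R Q]

private lemma map_subL' (f f' : M →ₗ[R] P) (g : N →ₗ[R] Q) :
    map (f - f') g = map f g - map f' g := by
  ext x y; simp [sub_tmul]

private lemma map_subR' (f : M →ₗ[R] P) (g g' : N →ₗ[R] Q) :
    map f (g - g') = map f g - map f g' := by
  ext x y; simp [tmul_sub]

private lemma map_negR' (f : M →ₗ[R] P) (g : N →ₗ[R] Q) :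
    map f (-g) = -map f g := by
  ext x y; simp [tmul_neg]

variable (D : BVData R A)

-- pointwise graded facts
private lemma hinv (hg : IsGraded D) (x : A) : D.ι (D.ι x) = x :=
  LinearMap.congr_fun hg.invol x

private lemma hmulι (hg : IsGraded D) (u : A ⊗[R] A) :
    D.ι (D.mul u) = D.mul (map D.ι D.ι u) :=
  LinearMap.congr_fun hg.mul_even u

private lemma hcopι (hg : IsGraded D) (x : A) :
    D.cop (D.ι x) = -((map D.ι D.ι) (D.cop x)) := by
  have := LinearMap.congr_fun hg.cop_odd x
  simp only [comp_apply, LinearMap.neg_apply] at this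
  rw [this, neg_neg]

private lemma hdι (hg : IsGraded D) (x : A) :
    D.d (D.ι x) = -(D.ι (D.d x)) := by
  have := LinearMap.congr_fun hg.d_odd x
  simp only [comp_apply, LinearMap.neg_apply] at this
  rw [this, neg_neg]

-- E1 : naturality of d1 with respect to assoc
private lemma E1 (u : A ⊗[R] A) (y : A) :
    D.d1 ((TensorProduct.assoc R A A A) (u ⊗ₜ[R] y))
      = (TensorProduct.assoc R A A A) (D.dL u ⊗ₜ[R] y) := by
  induction u using TensorProduct.induction_on with
  | zero => simp [d1, dL]
  | tmul a b => simp [d1, dL]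
  | add u v hu hv => simp only [add_tmul, map_add, hu, hv]

private lemma E1' (u : A ⊗[R] A) (y : A) :
    (TensorProduct.assoc R A A A) ((map D.d LinearMap.id u) ⊗ₜ[R] y)
      = map D.d (LinearMap.id : A ⊗[R] A →ₗ[R] A ⊗[R] A)
          ((TensorProduct.assoc R A A A) (u ⊗ₜ[R] y)) := by
  have := E1 D u y
  simp only [BVData.d1, BVData.dL] at this
  exact this.symm

-- base operator lemmas
private lemma L1 : D.dL ∘ₗ D.mulR = D.mulR ∘ₗ D.d1 := by
  ext x y z; simp [dL, mulR, d1]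

private lemma L2 (hg : IsGraded D) : D.dR ∘ₗ D.mulL = D.mulL ∘ₗ D.d3 := by
  ext x y z; simp [dR, mulL, d3, hmulι D hg]

private lemma L3 (hg : IsGraded D) : D.copL ∘ₗ D.dR = -(D.d3 ∘ₗ D.copL) := by
  ext x y
  simp [copL, dR, d3, hcopι D hg, map_map_assoc, neg_tmul]

private lemma L4 (hg : IsGraded D) : D.copR ∘ₗ D.dL = -(D.d1 ∘ₗ D.copR) := by
  ext x y
  simp [copR, dL, d1, hdι D hg, neg_tmul]

private lemma L5 : D.braL = D.dL ∘ₗ D.mulL - D.mulL ∘ₗ D.d1 - D.mulL ∘ₗ D.d2 := by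
  ext x y z
  simp [braL, bracket, dL, dR, mulL, d1, d2, sub_tmul]

private lemma L6 : D.braR = D.dR ∘ₗ D.mulR - D.mulR ∘ₗ D.d2 - D.mulR ∘ₗ D.d3 := by
  ext x y z
  simp [braR, bracket, dL, dR, mulR, d2, d3, tmul_sub]

private lemma L7 : D.cobraL = D.copL ∘ₗ D.dL + D.d1 ∘ₗ D.copL + D.d2 ∘ₗ D.copL := by
  ext x y
  simp [cobraL, cobracket, copL, dL, dR, d1, d2, add_tmul, E1' D, map_map_assoc]

private lemma L8 (hg : IsGraded D) :
    D.cobraR = D.copR ∘ₗ D.dR + D.d2 ∘ₗ D.copR + D.d3 ∘ₗ D.copR := by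
  ext x y
  simp [cobraR, cobracket, copR, dR, dL, d2, d3, tmul_add, hinv D hg]

-- composite forms
private lemma C1 : D.dL ∘ₗ (D.mulR ∘ₗ D.copL) = D.mulR ∘ₗ (D.d1 ∘ₗ D.copL) := by
  rw [← comp_assoc, L1, comp_assoc]

private lemma C2 (hg : IsGraded D) :
    D.dR ∘ₗ (D.mulL ∘ₗ D.copR) = D.mulL ∘ₗ (D.d3 ∘ₗ D.copR) := by
  rw [← comp_assoc, L2 D hg, comp_assoc]

private lemma C3 (hg : IsGraded D) :
    (D.mulR ∘ₗ D.copL) ∘ₗ D.dR = -(D.mulR ∘ₗ (D.d3 ∘ₗ D.copL)) := by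
  rw [comp_assoc, L3 D hg, comp_neg]

private lemma C4 (hg : IsGraded D) :
    (D.mulL ∘ₗ D.copR) ∘ₗ D.dL = -(D.mulL ∘ₗ (D.d1 ∘ₗ D.copR)) := by
  rw [comp_assoc, L4 D hg, comp_neg]

-- insertMid basic lemmas
private lemma insertMid_zero (f g : A ⊗[R] A →ₗ[R] A) (s : A →ₗ[R] A) :
    insertMid f g s (0 : A ⊗[R] A) = 0 := by
  simp only [insertMid]
  rw [map_zero (TensorProduct.mk R (A ⊗[R] A) A)]
  have : map s (0 : A →ₗ[R] (A ⊗[R] A) ⊗[R] A) = 0 := by ext x; simp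
  rw [this]
  simp

private lemma insertMid_add (f g : A ⊗[R] A →ₗ[R] A) (s : A →ₗ[R] A) (c c' : A ⊗[R] A) :
    insertMid f g s (c + c') = insertMid f g s c + insertMid f g s c' := by
  simp only [insertMid]
  rw [map_add (TensorProduct.mk R (A ⊗[R] A) A)]
  rw [map_add_right]
  simp [LinearMap.comp_add]

private lemma insertMid_neg (f g : A ⊗[R] A →ₗ[R] A) (s : A →ₗ[R] A) (c : A ⊗[R] A) :
    insertMid f g s (-c) = -insertMid f g s c := by
  have h := insertMid_add f g s (-c) c
  rw [neg_add_cancel, insertMid_zero] at h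
  exact eq_neg_of_add_eq_zero_left h.symm

private lemma insertMid_subL (f f' g : A ⊗[R] A →ₗ[R] A) (s : A →ₗ[R] A) (c : A ⊗[R] A) :
    insertMid (f - f') g s c = insertMid f g s c - insertMid f' g s c := by
  unfold insertMid
  rw [map_subL', LinearMap.sub_comp]

private lemma insertMid_subR (f g g' : A ⊗[R] A →ₗ[R] A) (s : A →ₗ[R] A) (c : A ⊗[R] A) :
    insertMid f (g - g') s c = insertMid f g s c - insertMid f g' s c := by
  unfold insertMid
  rw [map_subR', LinearMap.sub_comp]

-- insertMid composition lemmas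
private lemma C5 (c : A ⊗[R] A) :
    D.dL ∘ₗ insertMid D.mul D.mul D.ι c = insertMid (D.d ∘ₗ D.mul) D.mul D.ι c := by
  induction c using TensorProduct.induction_on with
  | zero => simp [insertMid_zero]
  | tmul c₁ c₂ => ext x y; simp [insertMid, dL]
  | add u v hu hv =>
      simp only [insertMid_add, LinearMap.comp_add, hu, hv]

private lemma C6 (hg : IsGraded D) (c : A ⊗[R] A) :
    D.dR ∘ₗ insertMid D.mul D.mul D.ι c
      = insertMid D.mul (D.d ∘ₗ D.mul) LinearMap.id ((map D.ι LinearMap.id) c) := by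
  induction c using TensorProduct.induction_on with
  | zero => simp [insertMid_zero]
  | tmul c₁ c₂ => ext x y; simp [insertMid, dR, hmulι D hg, hinv D hg]
  | add u v hu hv =>
      simp only [map_add, insertMid_add, LinearMap.comp_add, hu, hv]

private lemma C7 (hg : IsGraded D) (c : A ⊗[R] A) :
    insertMid D.mul D.mul D.ι c ∘ₗ D.dL = -insertMid (D.mul ∘ₗ D.dL) D.mul D.ι c := by
  induction c using TensorProduct.induction_on with
  | zero => simp [insertMid_zero]
  | tmul c₁ c₂ => ext x y; simp [insertMid, dL, hdι D hg, neg_tmul]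
  | add u v hu hv =>
      simp only [insertMid_add, LinearMap.add_comp, hu, hv]; abel

private lemma C8 (hg : IsGraded D) (c : A ⊗[R] A) :
    insertMid D.mul D.mul D.ι c ∘ₗ D.dR
      = insertMid D.mul (D.mul ∘ₗ map LinearMap.id D.d) LinearMap.id c := by
  induction c using TensorProduct.induction_on with
  | zero => simp [insertMid_zero]
  | tmul c₁ c₂ => ext x y; simp [insertMid, dR, hinv D hg]
  | add u v hu hv =>
      simp only [insertMid_add, LinearMap.add_comp, hu, hv]

private lemma C9 (c : A ⊗[R] A) :
    insertMid D.mul (D.mul ∘ₗ D.dR) LinearMap.id ((map D.ι LinearMap.id) c)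
      = insertMid D.mul (D.mul ∘ₗ map LinearMap.id D.d) LinearMap.id ((map D.ι D.ι) c) := by
  induction c using TensorProduct.induction_on with
  | zero => simp [insertMid_zero]
  | tmul c₁ c₂ => ext x y; simp [insertMid, dR]
  | add u v hu hv =>
      simp only [map_add, insertMid_add, hu, hv]

private lemma C10 (hg : IsGraded D) (c : A ⊗[R] A) :
    insertMid (D.mul ∘ₗ D.dR) D.mul D.ι c
      = insertMid D.mul D.mul LinearMap.id (D.dL c) := by
  induction c using TensorProduct.induction_on with
  | zero => simp [insertMid_zero, dL]
  | tmul c₁ c₂ => ext x y; simp [insertMid, dR, dL, hinv D hg]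
  | add u v hu hv =>
      simp only [map_add, insertMid_add, hu, hv, dL]

private lemma C11 (c : A ⊗[R] A) :
    insertMid D.mul (D.mul ∘ₗ D.dL) LinearMap.id ((map D.ι LinearMap.id) c)
      = insertMid D.mul D.mul LinearMap.id (D.dR c) := by
  induction c using TensorProduct.induction_on with
  | zero => simp [insertMid_zero, dR]
  | tmul c₁ c₂ => ext x y; simp [insertMid, dR, dL]
  | add u v hu hv =>
      simp only [map_add, insertMid_add, hu, hv, dR]

-- the copairing facts
private lemma P1 (hg : IsGraded D) : (map D.ι D.ι) D.copair = -D.copair := by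
  have := hcopι D hg D.e
  rw [hg.unit_even] at this
  simp only [BVData.copair]
  conv_rhs => rw [this]
  rw [neg_neg]

private lemma P2 (hde : D.d D.e = 0) :
    D.cobracket D.e = D.dL D.copair + D.dR D.copair := by
  simp [cobracket, copair, hde]

end Aux

/-- In an odd BV unital infinitesimal bialgebra `(A, μ, η, λ, Δ)` with
`Δη = 0`, with `β = Δμ - μ(Δ⊗1) - μ(1⊗Δ)` and `γ = λΔ + (Δ⊗1)λ + (1⊗Δ)λ`:
`γμ - λβ = (β⊗1)(1⊗λ) + (μ⊗1)(1⊗γ) + (1⊗μ)(γ⊗1) + (1⊗β)(λ⊗1)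
  - (μ⊗β)(1⊗λη⊗1) - (β⊗μ)(1⊗λη⊗1) - (μ⊗μ)(1⊗γη⊗1)`. -/
theorem bracket_cobracket_relation (D : BVData R A) (h : IsBVui D)
    (hde : D.d D.e = 0) :
    D.cobracket ∘ₗ D.mul - D.cop ∘ₗ D.bracket =
      D.braL ∘ₗ D.copR + D.mulL ∘ₗ D.cobraR + D.mulR ∘ₗ D.cobraL + D.braR ∘ₗ D.copL
      - insertMid D.mul D.bracket (D.ι ∘ₗ D.ι)
          ((map D.ι (LinearMap.id : A →ₗ[R] A)) D.copair)
      - insertMid D.bracket D.mul D.ι D.copair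
      - insertMid D.mul D.mul LinearMap.id (D.cobracket D.e) := by
  classical
  have hg := h.toIsGraded
  have lhs_eq : D.cobracket ∘ₗ D.mul - D.cop ∘ₗ D.bracket
      = D.dL ∘ₗ (D.cop ∘ₗ D.mul) + D.dR ∘ₗ (D.cop ∘ₗ D.mul)
        + (D.cop ∘ₗ D.mul) ∘ₗ D.dL + (D.cop ∘ₗ D.mul) ∘ₗ D.dR := by
    simp only [BVData.cobracket, BVData.bracket, LinearMap.add_comp, LinearMap.comp_sub,
      LinearMap.comp_assoc]
    abel
  rw [lhs_eq, h.unital_infinitesimal]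
  rw [L5 D, L6 D, L7 D, L8 D hg, hg.invol]
  simp only [BVData.bracket]
  rw [insertMid_subR, insertMid_subR, insertMid_subL, insertMid_subL]
  rw [P2 D hde, insertMid_add]
  rw [C9 D, C10 D hg, C11 D, P1 D hg, insertMid_neg]
  simp only [LinearMap.add_comp, LinearMap.comp_add, LinearMap.sub_comp, LinearMap.comp_sub]
  rw [C1 D, C2 D hg, C3 D hg, C4 D hg, C5 D, C6 D hg, C7 D hg, C8 D hg]
  simp only [LinearMap.comp_assoc, LinearMap.neg_comp, LinearMap.comp_neg]
  abel
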